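/- arXiv:1201.3291 — 7 statements merged into one kernel-verified Lean document; each statement's English description precedes it below -/
import Mathlib

section
/- Let K be a blocking set of PG(n,q) (a set of points meeting every hyperplane) with |K| = q + k + N where N ≥ 1 is the number of points of K on the hyperplane X_n = 0, and with (0,...,0,1,0) ∈ K. If the slope m = (m_0,...,m_{n-2}) defines an (n-2)-dimensional subspace at infinity containing no point of K, then the polynomial X^q − X divides H(X,m), where H is the Rédei polynomial of the affine part U of K. Moreover, if k < q − 1, then H(X,m)/(X^q − X) = f(X,m) where f(X,X̄) = X^k + h_1(X̄)X^{k-1} + ... + h_k(X̄) is formed from the first k+1 coefficients of H, and f(X,m) splits into linear factors over F_q. -/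
open scoped Classical

noncomputable section

/-- The point set of `PG(n,q)`, `q = p^h`: the projectivization of `F_q^{n+1}`. -/
abbrev PGPoint (p h n : ℕ) [Fact p.Prime] :=
  Projectivization (GaloisField p h) (Fin (n+1) → GaloisField p h)

noncomputable instance (p h n : ℕ) [Fact p.Prime] : Fintype (PGPoint p h n) :=
  @Fintype.ofFinite _ (Quotient.finite _)

/-- The affine coordinates of a point of `PG(n+2,q)` not on the hyperplane at infinity
`X_{n+2} = 0` (obtained by normalizing its last coordinate to `1`). -/
def affCoord (p h n : ℕ) [Fact p.Prime] (P : PGPoint p h (n+2)) (i : Fin (n+2)) :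
    GaloisField p h :=
  P.rep i.castSucc / P.rep (Fin.last (n+2))

/-- The Rédei polynomial `H(X,m)` of the affine part `U` of a point set `K` of
`PG(n+2,q)`, evaluated at a fixed slope `m = (m_0,…,m_n)`: the product over the affine
points `(a_0,…,a_{n+1})` of `K` of `X + a_0 m_0 + ⋯ + a_n m_n - a_{n+1}`. -/
def redeiPoly (p h n : ℕ) [Fact p.Prime] (K : Finset (PGPoint p h (n+2)))
    (m : Fin (n+1) → GaloisField p h) : Polynomial (GaloisField p h) :=
  ∏ P ∈ K.filter (fun P => P.rep (Fin.last (n+2)) ≠ 0),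
    (Polynomial.X + Polynomial.C
      ((∑ i : Fin (n+1), affCoord p h n P i.castSucc * m i)
        - affCoord p h n P (Fin.last (n+1))))

/-!
For each `b ∈ F_q` the hyperplane `m·X̄ - X_{n+1} + b X_{n+2} = 0` meets `K`, by the blocking
property, and not at infinity, since the subspace at infinity of slope `m` avoids `K`. An affine
point of `K` on that hyperplane makes the corresponding linear factor of `H(X,m)` vanish at `b`,
so every element of `F_q` is a root of `H(X,m)` and `X^q - X` divides it. As `H(X,m)` has degree
`|U| = q + k`, the quotient `f` has degree `k`; when `k < q - 1` the term `X·f` of `f·(X^q - X)`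
does not reach the degrees `q, …, q + k`, so the coefficients of `f` are the top `k + 1`
coefficients of `H`. Being a divisor of a product of linear factors, `f` splits.
-/

open Polynomial
open scoped LinearAlgebra.Projectivization

theorem FiniteField.X_pow_card_sub_X_dvd_of_forall_isRoot {K : Type*} [Field K] [Finite K]
    {f : K[X]} (hf : ∀ a, f.IsRoot a) : X ^ Nat.card K - X ∣ f := by
  cases nonempty_fintype K
  rcases eq_or_ne f 0 with rfl | hf0
  · exact dvd_zero _
  rw [Nat.card_eq_fintype_card]
  have hroots := FiniteField.roots_X_pow_card_sub_X K
  refine Splits.dvd_of_roots_le_roots ?_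
    (FiniteField.X_pow_card_sub_X_ne_zero K Fintype.one_lt_card) ?_
  · rw [splits_iff_card_roots, hroots,
      FiniteField.X_pow_card_sub_X_natDegree_eq K Fintype.one_lt_card]
    rfl
  · rw [hroots, Multiset.le_iff_subset Finset.univ.nodup]
    exact fun a _ => (mem_roots hf0).2 (hf a)

theorem Polynomial.coeff_mul_X_pow_sub_X {R : Type*} [CommRing R] (g : R[X]) {q i : ℕ}
    (hi : g.natDegree + 1 < q + i) : (g * (X ^ q - X)).coeff (q + i) = g.coeff i := by
  obtain ⟨j, hj⟩ : ∃ j, q + i = j + 1 := ⟨q + i - 1, by omega⟩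
  rw [mul_sub, coeff_sub, hj, coeff_mul_X, coeff_eq_zero_of_natDegree_lt (p := g) (by omega),
    ← hj, add_comm q, coeff_mul_X_pow, sub_zero]

theorem Polynomial.natDegree_X_pow_sub_X {R : Type*} [CommRing R] [Nontrivial R] {q : ℕ}
    (hq : 1 < q) : (X ^ q - X : R[X]).natDegree = q := by
  rw [natDegree_sub_eq_left_of_natDegree_lt] <;> simp [hq]

theorem Polynomial.eq_sum_coeff_mul_X_pow_sub_X_of_dvd {R : Type*} [CommRing R] [Nontrivial R]
    {H : R[X]} {q k : ℕ} (hkq : k + 1 < q) (hH : H.natDegree ≤ q + k)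
    (hdvd : X ^ q - X ∣ H) :
    H = (∑ i ∈ Finset.range (k + 1), C (H.coeff (q + i)) * X ^ i) * (X ^ q - X) := by
  obtain ⟨g, rfl⟩ := hdvd
  have hg : g.natDegree ≤ k := by
    rcases eq_or_ne g 0 with rfl | hg0
    · simp
    have hM : (X ^ q - X : R[X]).Monic :=
      monic_X_pow_sub (by rw [degree_X]; exact_mod_cast (by omega : 1 < q))
    rw [hM.natDegree_mul' hg0, natDegree_X_pow_sub_X (by omega)] at hH
    omega
  rw [mul_comm]
  congr 1
  refine (g.as_sum_range_C_mul_X_pow' (n := k + 1) (by omega)).trans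
    (Finset.sum_congr rfl fun i _ => ?_)
  rw [coeff_mul_X_pow_sub_X g (by omega)]

theorem Projectivization.exists_mem_ker_of_forall_hyperplane {F V : Type*} [Field F]
    [AddCommGroup V] [Module F V] [FiniteDimensional F V] {d : ℕ}
    (hV : Module.finrank F V = d + 1) {S : Set (ℙ F V)}
    (hS : ∀ W : Submodule F V, Module.finrank F W = d → ∃ P ∈ S, P.submodule ≤ W)
    {φ : Module.Dual F V} (hφ : φ ≠ 0) : ∃ P ∈ S, φ P.rep = 0 := by
  obtain ⟨P, hPS, hPW⟩ := hS (LinearMap.ker φ) (by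
    have := φ.finrank_ker_add_one_of_ne_zero hφ
    omega)
  exact ⟨P, hPS, hPW (P.submodule_eq ▸ Submodule.mem_span_singleton_self _)⟩

section HyperplaneForm

variable {F : Type*} [Field F] {n : ℕ}

/-- The hyperplane `m_0 X_0 + ⋯ + m_n X_n - X_{n+1} + b X_{n+2} = 0` with slope `m`. -/
def hyperplaneForm (m : Fin (n + 1) → F) (b : F) : Module.Dual F (Fin (n + 3) → F) :=
  dotProductBilin F F (Fin.snoc (Fin.snoc m (-1)) b)

theorem hyperplaneForm_apply (m : Fin (n + 1) → F) (b : F) (x : Fin (n + 3) → F) :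
    hyperplaneForm m b x = (∑ i : Fin (n + 1), m i * x i.castSucc.castSucc)
      - x (Fin.last (n + 1)).castSucc + b * x (Fin.last (n + 2)) := by
  simp only [hyperplaneForm, dotProductBilin_apply_apply, dotProduct,
    Fin.sum_univ_castSucc, Fin.snoc_castSucc, Fin.snoc_last]
  ring

theorem hyperplaneForm_ne_zero (m : Fin (n + 1) → F) (b : F) : hyperplaneForm m b ≠ 0 := by
  intro h
  have := hyperplaneForm_apply m b (Pi.single (Fin.last (n + 1)).castSucc 1)
  simp [h, (Fin.castSucc_lt_last _).ne] at this

end HyperplaneForm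

section RedeiPolynomial

variable {p h n : ℕ} [Fact p.Prime]

theorem redeiPoly_monic (K : Finset (PGPoint p h (n + 2))) (m : Fin (n + 1) → GaloisField p h) :
    (redeiPoly p h n K m).Monic :=
  monic_prod_of_monic _ _ fun _ _ => monic_X_add_C _

theorem natDegree_redeiPoly (K : Finset (PGPoint p h (n + 2)))
    (m : Fin (n + 1) → GaloisField p h) :
    (redeiPoly p h n K m).natDegree = (K.filter fun P => P.rep (Fin.last (n + 2)) ≠ 0).card := by
  rw [redeiPoly, natDegree_prod_of_monic _ _ fun _ _ => monic_X_add_C _]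
  simp only [natDegree_X_add_C, Finset.sum_const, smul_eq_mul, mul_one]

theorem redeiPoly_splits (K : Finset (PGPoint p h (n + 2))) (m : Fin (n + 1) → GaloisField p h) :
    (redeiPoly p h n K m).Splits :=
  Splits.prod fun _ _ => Splits.of_natDegree_le_one (natDegree_X_add_C _).le

theorem redeiPoly_isRoot {K : Finset (PGPoint p h (n + 2))}
    (hbl : ∀ W : Submodule (GaloisField p h) (Fin (n + 3) → GaloisField p h),
      Module.finrank (GaloisField p h) W = n + 2 → ∃ P ∈ K, P.submodule ≤ W)
    {m : Fin (n + 1) → GaloisField p h}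
    (hslope : ∀ P ∈ K, ¬ (P.rep (Fin.last (n + 2)) = 0 ∧
      (∑ i : Fin (n + 1), m i * P.rep i.castSucc.castSucc)
        - P.rep (Fin.last (n + 1)).castSucc = 0))
    (b : GaloisField p h) : (redeiPoly p h n K m).IsRoot b := by
  obtain ⟨P, hPK, hP⟩ := Projectivization.exists_mem_ker_of_forall_hyperplane
    (Module.finrank_fin_fun _) (S := K) hbl (hyperplaneForm_ne_zero m b)
  rw [hyperplaneForm_apply] at hP
  by_cases hinf : P.rep (Fin.last (n + 2)) = 0
  · exact absurd ⟨hinf, by simpa [hinf] using hP⟩ (hslope P hPK)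
  rw [IsRoot, redeiPoly, eval_prod]
  refine Finset.prod_eq_zero (Finset.mem_filter.2 ⟨hPK, hinf⟩) ?_
  simp_rw [eval_add, eval_X, eval_C, affCoord, div_mul_eq_mul_div, mul_comm (P.rep _) (m _),
    ← Finset.sum_div]
  field_simp
  linear_combination hP

end RedeiPolynomial

/-- let `K` be a blocking set of `PG(n+2,q)` with `|K| = q + k + N`,
where `N ≥ 1` is the number of points of `K` at infinity, containing the point
`(0,…,0,1,0)`.  If the slope `m` defines an `n`-dimensional subspace at infinity
containing no point of `K`, then `X^q - X` divides `H(X,m)`; moreover, if `k < q-1`,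
then `H(X,m) = f(X,m)·(X^q - X)` where `f` is formed from the first `k+1` coefficients
of `H`, and `f(X,m)` splits into linear factors over `F_q`. -/
theorem stmt1 (p h n k N : ℕ) [Fact p.Prime] (hh : 0 < h)
    (K : Finset (PGPoint p h (n+2)))
    -- K is a blocking set: it meets every hyperplane
    (hbl : ∀ W : Submodule (GaloisField p h) (Fin (n+3) → GaloisField p h),
      Module.finrank (GaloisField p h) W = n + 2 → ∃ P ∈ K, P.submodule ≤ W)
    (hNdef : (K.filter fun P => P.rep (Fin.last (n+2)) = 0).card = N)
    (hcard : K.card = p ^ h + k + N)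
    (m : Fin (n+1) → GaloisField p h)
    -- the (n)-dimensional subspace at infinity defined by the slope m contains
    -- no point of K
    (hslope : ∀ P ∈ K, ¬ (P.rep (Fin.last (n+2)) = 0 ∧
      (∑ i : Fin (n+1), m i * P.rep i.castSucc.castSucc)
        - P.rep (Fin.last (n+1)).castSucc = 0)) :
    (Polynomial.X ^ (p ^ h) - Polynomial.X) ∣ redeiPoly p h n K m ∧
    (k < p ^ h - 1 →
      redeiPoly p h n K m =
        (∑ i ∈ Finset.range (k + 1),
          Polynomial.C ((redeiPoly p h n K m).coeff (p ^ h + i)) * Polynomial.X ^ i) *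
        (Polynomial.X ^ (p ^ h) - Polynomial.X) ∧
      Polynomial.Splits
        (∑ i ∈ Finset.range (k + 1),
          Polynomial.C ((redeiPoly p h n K m).coeff (p ^ h + i)) * Polynomial.X ^ i)) := by
  have hcard_F := GaloisField.card p h hh.ne'
  have hdvd : X ^ p ^ h - X ∣ redeiPoly p h n K m :=
    hcard_F ▸ FiniteField.X_pow_card_sub_X_dvd_of_forall_isRoot (redeiPoly_isRoot hbl hslope)
  refine ⟨hdvd, fun hk => ?_⟩
  have hdeg : (redeiPoly p h n K m).natDegree = p ^ h + k := by
    have := K.card_filter_add_card_filter_not fun P => P.rep (Fin.last (n + 2)) = 0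
    rw [hNdef, hcard] at this
    rw [natDegree_redeiPoly, ← Nat.add_right_cancel_iff (n := N), ← this, add_comm]
  have hquot := eq_sum_coeff_mul_X_pow_sub_X_of_dvd (by omega) hdeg.le hdvd
  exact ⟨hquot, (redeiPoly_splits K m).of_dvd (redeiPoly_monic K m).ne_zero
    (Dvd.intro _ hquot.symm)⟩
end
end

section
/- A blocking set B of PG(n,q) of size smaller than 2q is uniquely reducible to a minimal blocking set: there is a unique minimal blocking set contained in B, namely the set of essential points of B. -/
/-!
Suppose some hyperplane contains no essential point of `B`, and pick such a hyperplane `W`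
meeting `B` in as few points as possible. A single point of `B ∩ W` would be essential, so
`B ∩ W` contains two points `P₁ ≠ P₂`. Write `W = ker ψ` and choose functionals `χ₁, χ₂` with
`χ₁ P₁ ≠ 0`, `χ₂ P₂ ≠ 0 = χ₂ P₁`. For `y ∈ 𝔽_q² \ {0}` the hyperplane `ker (ψ - y₀ χ₁ - y₁ χ₂)`
misses `P₁` or `P₂`, so by minimality it meets `B \ W`; that is, the affine lines
`(χ₁ Q / ψ Q) y₀ + (χ₂ Q / ψ Q) y₁ = 1`, `Q ∈ B \ W`, cover `𝔽_q² \ {0}`. The polynomial bound of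
Jamison and Brouwer–Schrijver then gives `|B \ W| ≥ 2(q - 1)`, hence `|B| ≥ 2q`.

So the essential points of `B` block; as every blocking subset of `B` contains them, they form
the unique minimal blocking subset.
-/

open scoped Classical

noncomputable section

/-- A finite set of points of `PG(n,q)` is a blocking set if it meets every hyperplane. -/
def IsBlockingSet (p h n : ℕ) [Fact p.Prime] (B : Finset (PGPoint p h n)) : Prop :=
  ∀ W : Submodule (GaloisField p h) (Fin (n+1) → GaloisField p h),
    Module.finrank (GaloisField p h) W = n → ∃ P ∈ B, P.submodule ≤ W

/-- A minimal blocking set: no proper subset is a blocking set. -/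
def IsMinimalBlockingSet (p h n : ℕ) [Fact p.Prime] (B : Finset (PGPoint p h n)) : Prop :=
  IsBlockingSet p h n B ∧ ∀ B' ⊂ B, ¬ IsBlockingSet p h n B'

/-- A point `P` of `B` is essential if some hyperplane meets `B` exactly in `P`
(a tangent hyperplane at `P`). -/
def IsEssential (p h n : ℕ) [Fact p.Prime] (B : Finset (PGPoint p h n))
    (P : PGPoint p h n) : Prop :=
  P ∈ B ∧ ∃ W : Submodule (GaloisField p h) (Fin (n+1) → GaloisField p h),
    Module.finrank (GaloisField p h) W = n ∧ P.submodule ≤ W ∧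
    ∀ Q ∈ B, Q.submodule ≤ W → Q = P

-- Under `hcover`, `∏ i ∈ N, (1 - a i ⬝ᵥ X)` is the indicator function of `0`, while every
-- polynomial of total degree below `(q - 1) |σ|` sums to zero over `K^σ`.
open MvPolynomial in
theorem sub_one_mul_card_le_of_forall_ne_zero_exists_dotProduct_eq_one
    {K ι σ : Type*} [Field K] [Fintype K] [Fintype σ] (N : Finset ι) (a : ι → σ → K)
    (hcover : ∀ y : σ → K, y ≠ 0 → ∃ i ∈ N, a i ⬝ᵥ y = 1) :
    (Fintype.card K - 1) * Fintype.card σ ≤ N.card := by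
  set g : MvPolynomial σ K := ∏ i ∈ N, (1 - ∑ j, C (a i j) * X j)
  have heval (y : σ → K) : eval y g = ∏ i ∈ N, (1 - a i ⬝ᵥ y) := by
    simp [g, dotProduct]
  have hsum : ∑ y, eval y g = 1 := by
    rw [Fintype.sum_eq_single 0 fun y hy => ?_]
    · rw [heval]
      simp
    · obtain ⟨i, hi, hy1⟩ := hcover y hy
      rw [heval]
      exact Finset.prod_eq_zero hi (by rw [hy1, sub_self])
  have hdeg : g.totalDegree ≤ N.card := by
    refine (totalDegree_finsetProd _ _).trans ?_
    refine (Finset.sum_le_card_nsmul _ _ 1 fun i _ => ?_).trans (by simp)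
    refine (totalDegree_sub _ _).trans (max_le (by simp) ?_)
    refine totalDegree_finsetSum_le fun j _ => (totalDegree_mul _ _).trans ?_
    simp [totalDegree_X]
  by_contra! hlt
  exact one_ne_zero (hsum ▸ sum_eval_eq_zero g (hdeg.trans_lt hlt))

namespace Projectivization

open scoped LinearAlgebra.Projectivization

variable {K V : Type*} [Field K] [AddCommGroup V] [Module K V]

theorem submodule_le_iff_rep_mem (P : ℙ K V) (W : Submodule K V) :
    P.submodule ≤ W ↔ P.rep ∈ W := by
  rw [submodule_eq, Submodule.span_singleton_le_iff_mem]

theorem exists_dual_apply_rep_ne_zero_of_ne {P Q : ℙ K V} (hPQ : P ≠ Q) :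
    ∃ f : Module.Dual K V, f P.rep ≠ 0 ∧ f Q.rep = 0 := by
  have hP : P.rep ∉ Q.submodule := fun hPQ' =>
    hPQ <| submodule_injective <| Submodule.eq_of_le_of_finrank_eq
      ((P.submodule_le_iff_rep_mem _).2 hPQ') (by simp [finrank_submodule])
  obtain ⟨f, hfP, hfQ⟩ := Submodule.exists_dual_map_eq_bot_of_notMem hP inferInstance
  refine ⟨f, hfP, ?_⟩
  rw [← LinearMap.le_ker_iff_map, submodule_eq, Submodule.span_singleton_le_iff_mem] at hfQ
  exact hfQ

end Projectivization

theorem Submodule.exists_dual_ker_eq {K V : Type*} [Field K] [AddCommGroup V] [Module K V]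
    [FiniteDimensional K V] (W : Submodule K V)
    (hW : Module.finrank K W + 1 = Module.finrank K V) :
    ∃ f : Module.Dual K V, LinearMap.ker f = W := by
  have hWtop : W < ⊤ := by
    refine lt_top_iff_ne_top.2 fun hWtop => ?_
    rw [hWtop, finrank_top] at hW
    omega
  obtain ⟨f, hf, hWf⟩ := W.exists_dual_map_eq_bot_of_lt_top hWtop inferInstance
  refine ⟨f, (Submodule.eq_of_le_of_finrank_eq ?_ ?_).symm⟩
  · rwa [← LinearMap.le_ker_iff_map] at hWf
  · have := Module.Dual.finrank_ker_add_one_of_ne_zero hf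
    omega

section PG

variable {p h n : ℕ} [Fact p.Prime]

local notation "𝔽" => GaloisField p h
local notation "𝔽V" => Fin (n+1) → GaloisField p h

theorem IsBlockingSet.filter_isEssential_subset {B M : Finset (PGPoint p h n)}
    (hM : IsBlockingSet p h n M) (hMB : M ⊆ B) :
    B.filter (IsEssential p h n B) ⊆ M := by
  intro P hP
  obtain ⟨-, W, hW, -, htangent⟩ := (Finset.mem_filter.1 hP).2
  obtain ⟨Q, hQM, hQW⟩ := hM W hW
  exact htangent Q (hMB hQM) hQW ▸ hQM

theorem one_lt_card_filter_of_forall_not_isEssential {B : Finset (PGPoint p h n)}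
    (hB : IsBlockingSet p h n B) {W : Submodule 𝔽 𝔽V} (hW : Module.finrank 𝔽 W = n)
    (hWess : ∀ P ∈ B, P.submodule ≤ W → ¬ IsEssential p h n B P) :
    1 < (B.filter (·.submodule ≤ W)).card := by
  obtain ⟨P, hPB, hPW⟩ := hB W hW
  by_contra! hle
  refine hWess P hPB hPW ⟨hPB, W, hW, hPW, fun Q hQB hQW => ?_⟩
  exact Finset.card_le_one.1 hle Q (Finset.mem_filter.2 ⟨hQB, hQW⟩) P
    (Finset.mem_filter.2 ⟨hPB, hPW⟩)

theorem exists_apply_rep_eq_zero_of_card_filter_le {B : Finset (PGPoint p h n)}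
    {W : Submodule 𝔽 𝔽V} (hWess : ∀ P ∈ B, P.submodule ≤ W → ¬ IsEssential p h n B P)
    (hmin : ∀ W' : Submodule 𝔽 𝔽V, Module.finrank 𝔽 W' = n →
      (∀ P ∈ B, P.submodule ≤ W' → ¬ IsEssential p h n B P) →
      (B.filter (·.submodule ≤ W)).card ≤ (B.filter (·.submodule ≤ W')).card)
    (φ : Module.Dual 𝔽 𝔽V) {P : PGPoint p h n} (hPB : P ∈ B) (hPW : P.submodule ≤ W)
    (hφP : φ P.rep ≠ 0) :
    ∃ Q ∈ B, ¬ Q.submodule ≤ W ∧ φ Q.rep = 0 := by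
  by_contra! hφ
  have hker : Module.finrank 𝔽 (LinearMap.ker φ) = n := by
    have := Module.Dual.finrank_ker_add_one_of_ne_zero (f := φ) (by rintro rfl; exact hφP rfl)
    rw [Module.finrank_fin_fun] at this
    omega
  have hsub : B.filter (·.submodule ≤ LinearMap.ker φ) ⊆ B.filter (·.submodule ≤ W) := by
    refine Finset.monotone_filter_right _ fun Q hQB hQker => ?_
    by_contra hQW
    exact hφ Q hQB hQW ((Q.submodule_le_iff_rep_mem _).1 hQker)
  have hessfree : ∀ Q ∈ B, Q.submodule ≤ LinearMap.ker φ → ¬ IsEssential p h n B Q :=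
    fun Q hQB hQker => hWess Q hQB (Finset.mem_filter.1 (hsub (Finset.mem_filter.2 ⟨hQB, hQker⟩))).2
  have heq := Finset.eq_of_subset_of_card_le hsub (hmin _ hker hessfree)
  have hP : P ∈ B.filter (·.submodule ≤ LinearMap.ker φ) := heq ▸ Finset.mem_filter.2 ⟨hPB, hPW⟩
  exact hφP ((P.submodule_le_iff_rep_mem _).1 (Finset.mem_filter.1 hP).2)

theorem exists_hyperplane_card_filter_lt (hh : 0 < h) {B : Finset (PGPoint p h n)}
    (hB : IsBlockingSet p h n B) (hcard : B.card < 2 * p ^ h)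
    {W : Submodule 𝔽 𝔽V} (hW : Module.finrank 𝔽 W = n)
    (hWess : ∀ P ∈ B, P.submodule ≤ W → ¬ IsEssential p h n B P) :
    ∃ W' : Submodule 𝔽 𝔽V, Module.finrank 𝔽 W' = n ∧
      (∀ P ∈ B, P.submodule ≤ W' → ¬ IsEssential p h n B P) ∧
      (B.filter (·.submodule ≤ W')).card < (B.filter (·.submodule ≤ W)).card := by
  by_contra! hmin
  set D := B.filter (·.submodule ≤ W)
  set N := B.filter (¬ ·.submodule ≤ W)
  have hD : 1 < D.card := one_lt_card_filter_of_forall_not_isEssential hB hW hWess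
  obtain ⟨P₁, hP₁, P₂, hP₂, hP₁₂⟩ := Finset.one_lt_card.1 hD
  obtain ⟨ψ, hψ⟩ := W.exists_dual_ker_eq (by rw [hW, Module.finrank_fin_fun])
  have hψ_eq_zero (Q : PGPoint p h n) : ψ Q.rep = 0 ↔ Q.submodule ≤ W := by
    rw [Q.submodule_le_iff_rep_mem, ← hψ, LinearMap.mem_ker]
  obtain ⟨χ₁, hχ₁P₁, -⟩ := Projectivization.exists_dual_apply_rep_ne_zero_of_ne hP₁₂
  obtain ⟨χ₂, hχ₂P₂, hχ₂P₁⟩ := Projectivization.exists_dual_apply_rep_ne_zero_of_ne hP₁₂.symm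
  have hcover : ∀ y : Fin 2 → 𝔽, y ≠ 0 →
      ∃ Q ∈ N, ![χ₁ Q.rep / ψ Q.rep, χ₂ Q.rep / ψ Q.rep] ⬝ᵥ y = 1 := by
    intro y hy
    set φ := ψ - y 0 • χ₁ - y 1 • χ₂
    obtain ⟨P, hPD, hφP⟩ : ∃ P ∈ D, φ P.rep ≠ 0 := by
      have hψP₁ := (hψ_eq_zero P₁).2 (Finset.mem_filter.1 hP₁).2
      have hψP₂ := (hψ_eq_zero P₂).2 (Finset.mem_filter.1 hP₂).2
      by_cases hy₀ : y 0 = 0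
      · have hy₁ : y 1 ≠ 0 := fun hy₁ => hy (funext fun i => by fin_cases i <;> assumption)
        exact ⟨P₂, hP₂, by simp [φ, hψP₂, hy₀, hy₁, hχ₂P₂]⟩
      · exact ⟨P₁, hP₁, by simp [φ, hψP₁, hχ₂P₁, hy₀, hχ₁P₁]⟩
    obtain ⟨Q, hQB, hQW, hφQ⟩ := exists_apply_rep_eq_zero_of_card_filter_le hWess hmin φ
      (Finset.mem_filter.1 hPD).1 (Finset.mem_filter.1 hPD).2 hφP
    refine ⟨Q, Finset.mem_filter.2 ⟨hQB, hQW⟩, ?_⟩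
    have hψQ : ψ Q.rep ≠ 0 := fun h0 => hQW ((hψ_eq_zero Q).1 h0)
    simp only [φ, LinearMap.sub_apply, LinearMap.smul_apply, smul_eq_mul] at hφQ
    simp only [dotProduct, Fin.sum_univ_two, Matrix.cons_val_zero, Matrix.cons_val_one]
    field_simp
    linear_combination -hφQ
  let _ : Fintype 𝔽 := Fintype.ofFinite 𝔽
  have hN := sub_one_mul_card_le_of_forall_ne_zero_exists_dotProduct_eq_one N _ hcover
  have hq : Fintype.card 𝔽 = p ^ h := by
    rw [← Nat.card_eq_fintype_card, GaloisField.card p h hh.ne']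
  have hDN : D.card + N.card = B.card := Finset.card_filter_add_card_filter_not _
  rw [hq, Fintype.card_fin] at hN
  omega

theorem isBlockingSet_filter_isEssential (hh : 0 < h) {B : Finset (PGPoint p h n)}
    (hB : IsBlockingSet p h n B) (hcard : B.card < 2 * p ^ h) :
    IsBlockingSet p h n (B.filter (IsEssential p h n B)) := by
  intro W hW
  induction hk : (B.filter (·.submodule ≤ W)).card using Nat.strong_induction_on
    generalizing W with | _ k ih => ?_
  by_contra! hW_ess
  obtain ⟨W', hW', hW'ess, hlt⟩ := exists_hyperplane_card_filter_lt hh hB hcard hW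
    fun P hPB hPW hP => hW_ess P (Finset.mem_filter.2 ⟨hPB, hP⟩) hPW
  obtain ⟨P, hP, hPW'⟩ := ih _ (hk ▸ hlt) W' hW' rfl
  exact hW'ess P (Finset.mem_filter.1 hP).1 hPW' (Finset.mem_filter.1 hP).2

end PG

theorem stmt2_general (p h n : ℕ) [Fact p.Prime] (hh : 0 < h)
    (B : Finset (PGPoint p h n)) (hB : IsBlockingSet p h n B)
    (hcard : B.card < 2 * p ^ h) :
    IsMinimalBlockingSet p h n (B.filter fun P => IsEssential p h n B P) ∧
    ∀ M : Finset (PGPoint p h n), M ⊆ B → IsMinimalBlockingSet p h n M →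
      M = B.filter fun P => IsEssential p h n B P := by
  have hE := isBlockingSet_filter_isEssential hh hB hcard
  refine ⟨⟨hE, fun B' hB'E hB' => ?_⟩, fun M hMB hM => ?_⟩
  · exact hB'E.2 (hB'.filter_isEssential_subset (hB'E.1.trans (Finset.filter_subset _ _)))
  · obtain hEM | hEM := (hM.1.filter_isEssential_subset hMB).eq_or_ssubset
    · exact hEM.symm
    · exact absurd hE (hM.2 _ hEM)

/-- a blocking set `B` of `PG(n,q)` of size `< 2q` is uniquely reducible to
a minimal blocking set: the set of essential points of `B` is a minimal blocking set
contained in `B`, and it is the unique minimal blocking set contained in `B`. -/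
theorem stmt2 (p h n : ℕ) [Fact p.Prime] (hh : 0 < h) (hn : 1 ≤ n)
    (B : Finset (PGPoint p h n)) (hB : IsBlockingSet p h n B)
    (hcard : B.card < 2 * p ^ h) :
    IsMinimalBlockingSet p h n (B.filter fun P => IsEssential p h n B P) ∧
    ∀ M : Finset (PGPoint p h n), M ⊆ B → IsMinimalBlockingSet p h n M →
      M = B.filter fun P => IsEssential p h n B P :=
  stmt2_general p h n hh B hB hcard

end
end

section
/- Embed PG(n,q) in PG(n,q^k) via the inclusion of fields F_q ⊆ F_{q^k}. Then the intersection of any hyperplane of PG(n,q^k) with the subgeometry PG(n,q) contains a subspace of PG(n,q) of dimension at least n−k. Consequently, every k-blocking set of PG(n,q) is a 1-blocking set (blocking set with respect to hyperplanes) of PG(n,q^k). -/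
open scoped Classical

noncomputable section

/-- The componentwise embedding `F_q^{n+1} → L^{n+1}` for a field extension `L/F_q`,
as an `F_q`-linear map (giving the embedding of `PG(n,q)` into `PG(n,q^k)` when
`[L : F_q] = k`). -/
def fieldEmb (p h n : ℕ) [Fact p.Prime] (L : Type*) [Field L]
    [Algebra (GaloisField p h) L] :
    (Fin (n+1) → GaloisField p h) →ₗ[GaloisField p h] (Fin (n+1) → L) :=
  LinearMap.compLeft (Algebra.linearMap (GaloisField p h) L) (Fin (n+1))

/-- embed `PG(n,q)` into `PG(n,q^k)` via `F_q ⊆ L`, `[L : F_q] = k`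
(so `|L| = q^k`).  For every hyperplane `W'` of `PG(n,q^k)`, the set of points of the
subgeometry `PG(n,q)` lying in `W'` contains a subspace of `PG(n,q)` of projective
dimension at least `n - k` (i.e. the preimage `F_q`-subspace has rank `≥ n-k+1`).
Consequently, every `k`-blocking set of `PG(n,q)` meets every hyperplane of
`PG(n,q^k)`, i.e. is a `1`-blocking set of `PG(n,q^k)`. -/
theorem stmt4 (p h n k : ℕ) [Fact p.Prime] (hh : 0 < h) (hk1 : 1 ≤ k) (hkn : k ≤ n)
    (L : Type*) [Field L] [Algebra (GaloisField p h) L]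
    (hL : Module.finrank (GaloisField p h) L = k)
    (W' : Submodule L (Fin (n+1) → L)) (hW' : Module.finrank L W' = n) :
    (n - k + 1 ≤ Module.finrank (GaloisField p h)
      (↥((W'.restrictScalars (GaloisField p h)).comap (fieldEmb p h n L)))) ∧
    ∀ B : Set (PGPoint p h n),
      (∀ S : Submodule (GaloisField p h) (Fin (n+1) → GaloisField p h),
        Module.finrank (GaloisField p h) S = n - k + 1 → ∃ P ∈ B, P.submodule ≤ S) →
      ∃ P ∈ B, fieldEmb p h n L P.rep ∈ W' := by
  set F := GaloisField p h
  have hFD : FiniteDimensional F L := FiniteDimensional.of_finrank_pos (hL ▸ hk1)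
  have hq : Module.finrank L ((Fin (n+1) → L) ⧸ W') = 1 := by
    have := W'.finrank_quotient_add_finrank
    rw [hW', Module.finrank_pi, Fintype.card_fin] at this
    omega
  have hqF : Module.finrank F ((Fin (n+1) → L) ⧸ W') = k := by
    rw [← Module.finrank_mul_finrank F L ((Fin (n+1) → L) ⧸ W'), hq, hL, mul_one]
  set g : (Fin (n+1) → F) →ₗ[F] ((Fin (n+1) → L) ⧸ W') :=
    (W'.mkQ.restrictScalars F).comp (fieldEmb p h n L) with hg
  have hker : LinearMap.ker g = (W'.restrictScalars F).comap (fieldEmb p h n L) := by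
    ext x
    simp [hg, LinearMap.mem_ker, Submodule.Quotient.mk_eq_zero]
  have hrank : n - k + 1 ≤ Module.finrank F ↥((W'.restrictScalars F).comap (fieldEmb p h n L)) := by
    have h1 := LinearMap.finrank_range_add_finrank_ker g
    have h2 : Module.finrank F (Fin (n+1) → F) = n + 1 := by
      simp [Module.finrank_pi]
    have h3 : Module.finrank F (LinearMap.range g) ≤ k := by
      rw [← hqF]
      exact Submodule.finrank_le _
    rw [h2] at h1
    have h4 : Module.finrank F ↥(LinearMap.ker g) =
        Module.finrank F ↥((W'.restrictScalars F).comap (fieldEmb p h n L)) := by rw [hker]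
    omega
  refine ⟨hrank, fun B hB => ?_⟩
  set V := (W'.restrictScalars F).comap (fieldEmb p h n L)
  obtain ⟨f, hf⟩ := exists_linearIndependent_of_le_finrank (R := F) (M := ↥V) hrank
  have hf' : LinearIndependent F fun i => (f i : Fin (n+1) → F) :=
    hf.map' V.subtype V.ker_subtype
  set S : Submodule F (Fin (n+1) → F) := Submodule.span F (Set.range fun i => (f i : Fin (n+1) → F))
  have hSV : S ≤ V := Submodule.span_le.mpr (by rintro _ ⟨i, rfl⟩; exact (f i).2)
  have hSrank : Module.finrank F S = n - k + 1 := by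
    rw [finrank_span_eq_card hf', Fintype.card_fin]
  obtain ⟨P, hPB, hPS⟩ := hB S hSrank
  refine ⟨P, hPB, ?_⟩
  have : P.rep ∈ S := hPS (by rw [Projectivization.submodule_eq]; exact Submodule.mem_span_singleton_self _)
  exact hSV this
end
end

section
/- For k ≥ n/2, a codeword c of C_k(n,q) lies in C_k(n,q) ∩ C_k(n,q)^⊥ if and only if (c,U) = 0 for all subspaces U of PG(n,q) with dim U ≥ n−k. -/
open scoped Classical

noncomputable section

/-- Incidence vector (over `F_p`) of the point set of the projective subspace
determined by a submodule `W`. -/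
def incVec (p h n : ℕ) [Fact p.Prime]
    (W : Submodule (GaloisField p h) (Fin (n+1) → GaloisField p h)) :
    PGPoint p h n → ZMod p :=
  fun P => if P.submodule ≤ W then 1 else 0

/-- The `p`-ary code `C_k(n,q)` generated by the incidence vectors of the
`k`-spaces (i.e. submodules of rank `k+1`) of `PG(n,q)`. -/
def PGCode (p h n k : ℕ) [Fact p.Prime] :
    Submodule (ZMod p) (PGPoint p h n → ZMod p) :=
  Submodule.span (ZMod p)
    { c | ∃ W : Submodule (GaloisField p h) (Fin (n+1) → GaloisField p h),
        Module.finrank (GaloisField p h) W = k + 1 ∧ c = incVec p h n W }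

/-- Standard inner product of two words over `F_p`. -/
def ip {X : Type*} [Fintype X] {p : ℕ} (c d : X → ZMod p) : ZMod p :=
  ∑ x, c x * d x

/-- The dual code of a code `C`. -/
def dualCode {X : Type*} [Fintype X] {p : ℕ}
    (C : Submodule (ZMod p) (X → ZMod p)) : Submodule (ZMod p) (X → ZMod p) where
  carrier := { v | ∀ c ∈ C, ip v c = 0 }
  zero_mem' := by intro c hc; simp [ip]
  add_mem' := by
    intro a b ha hb c hc
    simp only [Set.mem_setOf_eq, ip, Pi.add_apply, add_mul, Finset.sum_add_distrib] at *
    rw [ha c hc, hb c hc, add_zero]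
  smul_mem' := by
    intro r a ha c hc
    simp only [Set.mem_setOf_eq, ip, Pi.smul_apply, smul_eq_mul, mul_assoc, ← Finset.mul_sum] at *
    rw [ha c hc, mul_zero]

/-- Hamming weight of a word. -/
def wt {X : Type*} [Fintype X] {p : ℕ} (c : X → ZMod p) : ℕ :=
  (Finset.univ.filter fun x => c x ≠ 0).card

lemma cardK_cast (p h : ℕ) [Fact p.Prime] (hh : 0 < h) [Fintype (GaloisField p h)] :
    ((Fintype.card (GaloisField p h) : ℕ) : ZMod p) = 0 := by
  have : Nat.card (GaloisField p h) = p ^ h := GaloisField.card p h hh.ne'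
  rw [Nat.card_eq_fintype_card] at this
  rw [this]
  push_cast
  simp [ZMod.natCast_self, zero_pow hh.ne']

-- point count lemma

lemma sum_incVec (p h n : ℕ) [Fact p.Prime] (hh : 0 < h)
    (V : Submodule (GaloisField p h) (Fin (n+1) → GaloisField p h)) (hV : V ≠ ⊥) :
    ∑ P : PGPoint p h n, incVec p h n V P = 1 := by
  classical
  haveI : Fintype (GaloisField p h) := Fintype.ofFinite _
  set K := GaloisField p h with hK
  set M := Fin (n+1) → K with hM
  haveI : Fintype M := by infer_instance
  set T := {v : M // v ≠ 0} with hT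
  set f : T → PGPoint p h n := fun v => Projectivization.mk K v.1 v.2 with hf
  set q := Fintype.card K with hq
  -- fiber cardinality
  have fibcard : ∀ P : PGPoint p h n,
      (Finset.univ.filter fun v : T => f v = P).card = q - 1 := by
    intro P
    rw [← Fintype.card_subtype]
    rw [hq, ← Fintype.card_units]
    symm
    apply Fintype.card_congr
    refine Equiv.ofBijective (fun a : Kˣ =>
      (⟨⟨(a : K) • P.rep, smul_ne_zero (Units.ne_zero a) P.rep_nonzero⟩, ?_⟩ :
        {v : T // f v = P})) ⟨?_, ?_⟩
    · show Projectivization.mk K _ _ = P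
      conv_rhs => rw [← P.mk_rep]
      exact (Projectivization.mk_eq_mk_iff K _ _ _ P.rep_nonzero).2 ⟨a, rfl⟩
    · intro a b hab
      have h2 : (a : K) • P.rep = (b : K) • P.rep := congrArg (fun x => (x.1.1 : M)) hab
      exact Units.ext (smul_left_injective K P.rep_nonzero h2)
    · rintro ⟨⟨v, hv⟩, hfv⟩
      have hmk : Projectivization.mk K v hv = Projectivization.mk K P.rep P.rep_nonzero := by
        rw [P.mk_rep]; exact hfv
      obtain ⟨a, ha⟩ := (Projectivization.mk_eq_mk_iff K v P.rep hv P.rep_nonzero).1 hmk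
      exact ⟨a, Subtype.ext (Subtype.ext ha)⟩
  -- the double-counted sum
  have main := Finset.sum_fiberwise' (Finset.univ : Finset T) f
      (fun P => if P.submodule ≤ V then (1 : ZMod p) else 0)
  -- RHS of main: ∑ v : T, [v.1 ∈ V]
  have hrhs : ∑ v : T, (if (f v).submodule ≤ V then (1 : ZMod p) else 0)
      = ((Fintype.card V - 1 : ℕ) : ZMod p) := by
    have hcond : ∀ v : T, ((f v).submodule ≤ V ↔ v.1 ∈ V) := by
      intro v
      rw [hf]
      rw [Projectivization.submodule_mk, Submodule.span_singleton_le_iff_mem]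
    calc ∑ v : T, (if (f v).submodule ≤ V then (1 : ZMod p) else 0)
        = ∑ v : T, (if v.1 ∈ V then (1 : ZMod p) else 0) := by
          exact Finset.sum_congr rfl fun v _ => by simp [hcond v]
      _ = ((Finset.univ.filter fun v : T => v.1 ∈ V).card : ZMod p) := by
          rw [Finset.sum_boole]
      _ = ((Fintype.card {v : T // v.1 ∈ V} : ℕ) : ZMod p) := by
          rw [Fintype.card_subtype]
      _ = ((Fintype.card V - 1 : ℕ) : ZMod p) := by
          congr 1
          have e : {v : T // v.1 ∈ V} ≃ {x : V // ¬ x = 0} :=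
            ⟨fun v => ⟨⟨v.1.1, v.2⟩, fun hz => v.1.2 (by simpa using congrArg Subtype.val hz)⟩,
              fun x => ⟨⟨x.1.1, fun hz => x.2 (Subtype.ext hz)⟩, x.1.2⟩,
              fun v => rfl, fun x => rfl⟩
          rw [Fintype.card_congr e, Fintype.card_subtype_compl, Fintype.card_subtype_eq]
  -- LHS of main: each fiber sum
  have hlhs : ∀ P : PGPoint p h n,
      (∑ v ∈ Finset.univ.filter fun v : T => f v = P,
        (if P.submodule ≤ V then (1 : ZMod p) else 0))
      = ((q - 1 : ℕ) : ZMod p) * (if P.submodule ≤ V then (1 : ZMod p) else 0) := by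
    intro P
    rw [Finset.sum_const, fibcard P, nsmul_eq_mul]
  -- cast computations
  have hq0 : ((q : ℕ) : ZMod p) = 0 := cardK_cast p h hh
  have hq1 : 1 ≤ q := Fintype.card_pos
  have hqm1 : ((q - 1 : ℕ) : ZMod p) = -1 := by
    rw [Nat.cast_sub hq1, hq0]; ring
  have hVrank : Module.finrank K V ≠ 0 := by
    simpa [Submodule.finrank_eq_zero] using hV
  have hcardV : Fintype.card V = q ^ Module.finrank K V := Module.card_eq_pow_finrank
  have hcardV1 : ((Fintype.card V - 1 : ℕ) : ZMod p) = -1 := by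
    rw [hcardV, Nat.cast_sub (Nat.one_le_iff_ne_zero.2 (pow_ne_zero _ (by omega)))]
    push_cast
    rw [hq0, zero_pow hVrank]; ring
  rw [hrhs, hcardV1] at main
  calc ∑ P : PGPoint p h n, incVec p h n V P
      = ∑ P : PGPoint p h n, (if P.submodule ≤ V then (1 : ZMod p) else 0) := rfl
    _ = 1 := by
        have : ∑ P : PGPoint p h n, ((q - 1 : ℕ) : ZMod p) *
            (if P.submodule ≤ V then (1 : ZMod p) else 0) = -1 := by
          rw [← main]
          exact Finset.sum_congr rfl fun P _ => (hlhs P).symm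
        rw [hqm1, ← Finset.mul_sum, neg_one_mul] at this
        have h2 : -(∑ P : PGPoint p h n,
            (if P.submodule ≤ V then (1 : ZMod p) else 0)) = -1 := this
        exact neg_injective h2

lemma ip_incVec_incVec' (p h n : ℕ) [Fact p.Prime] (hh : 0 < h)
    (W U : Submodule (GaloisField p h) (Fin (n+1) → GaloisField p h)) (hWU : W ⊓ U ≠ ⊥) :
    ∑ x : PGPoint p h n, incVec p h n W x * incVec p h n U x = 1 := by
  rw [← sum_incVec p h n hh (W ⊓ U) hWU]
  refine Finset.sum_congr rfl fun P _ => ?_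
  simp only [incVec, le_inf_iff]
  by_cases h1 : P.submodule ≤ W <;> by_cases h2 : P.submodule ≤ U <;> simp [h1, h2]

lemma inf_ne_bot' (p h n k : ℕ) [Fact p.Prime] (hkn : k ≤ n) (h2k : n ≤ 2 * k)
    (W U : Submodule (GaloisField p h) (Fin (n+1) → GaloisField p h))
    (hW : Module.finrank (GaloisField p h) W = k + 1)
    (hU : n - k + 1 ≤ Module.finrank (GaloisField p h) U) :
    W ⊓ U ≠ ⊥ := by
  have hsup : Module.finrank (GaloisField p h) ↥(W ⊔ U) ≤ n + 1 :=
    (Submodule.finrank_le _).trans_eq (Module.finrank_fin_fun _)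
  have heq := Submodule.finrank_sup_add_finrank_inf_eq W U
  intro hbot
  rw [hbot] at heq
  simp only [finrank_bot, add_zero] at heq
  omega

lemma exists_W0 (p h n k : ℕ) [Fact p.Prime] (hkn : k ≤ n) :
    ∃ W : Submodule (GaloisField p h) (Fin (n+1) → GaloisField p h),
      Module.finrank (GaloisField p h) W = k + 1 := by
  have hle : k + 1 ≤ n + 1 := by omega
  have hli : LinearIndependent (GaloisField p h)
      (fun i : Fin (k+1) => Pi.basisFun (GaloisField p h) (Fin (n+1)) (Fin.castLE hle i)) :=
    (Pi.basisFun (GaloisField p h) (Fin (n+1))).linearIndependent.comp _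
      (Fin.castLE_injective hle)
  exact ⟨Submodule.span _ (Set.range _), by rw [finrank_span_eq_card hli, Fintype.card_fin]⟩

lemma ip_codeword (p h n k : ℕ) [Fact p.Prime] (hh : 0 < h) (hkn : k ≤ n) (h2k : n ≤ 2*k)
    (c : PGPoint p h n → ZMod p) (hc : c ∈ PGCode p h n k)
    (U : Submodule (GaloisField p h) (Fin (n+1) → GaloisField p h))
    (hU : n - k + 1 ≤ Module.finrank (GaloisField p h) U) :
    ip c (incVec p h n U) = ∑ x, c x := by
  induction hc using Submodule.span_induction with
  | mem d hd =>
      obtain ⟨W, hW, rfl⟩ := hd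
      simp only [ip]
      rw [ip_incVec_incVec' p h n hh W U (inf_ne_bot' p h n k hkn h2k W U hW hU)]
      have hWbot : W ≠ ⊥ := by
        intro hb; rw [hb] at hW; simp [finrank_bot] at hW
      rw [sum_incVec p h n hh W hWbot]
  | zero => simp [ip]
  | add a b _ _ ha hb =>
      simp only [ip, Pi.add_apply, add_mul, Finset.sum_add_distrib] at *
      rw [ha, hb]
  | smul r a _ ha =>
      simp only [ip, Pi.smul_apply, smul_eq_mul, mul_assoc, ← Finset.mul_sum] at *
      rw [ha]

/-- for `k ≥ n/2`, a codeword `c` of `C_k(n,q)` lies in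
`C_k(n,q) ∩ C_k(n,q)^⊥` iff `(c,U) = 0` for all subspaces `U` of dimension at least `n-k`. -/
theorem stmt9 (p h n k : ℕ) [Fact p.Prime] (hh : 0 < h) (hk1 : 1 ≤ k) (hkn : k ≤ n)
    (h2k : n ≤ 2 * k)
    (c : PGPoint p h n → ZMod p) (hc : c ∈ PGCode p h n k) :
    c ∈ PGCode p h n k ⊓ dualCode (PGCode p h n k) ↔
      ∀ U : Submodule (GaloisField p h) (Fin (n+1) → GaloisField p h),
        n - k + 1 ≤ Module.finrank (GaloisField p h) U → ip c (incVec p h n U) = 0 := by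
  have hnk : n - k + 1 ≤ k + 1 := by omega
  constructor
  · rintro ⟨-, hdual⟩ U hU
    obtain ⟨W0, hW0⟩ := exists_W0 p h n k hkn
    have hW0mem : incVec p h n W0 ∈ PGCode p h n k :=
      Submodule.subset_span ⟨W0, hW0, rfl⟩
    have h1 : ip c (incVec p h n W0) = 0 := hdual _ hW0mem
    rw [ip_codeword p h n k hh hkn h2k c hc W0 (by rw [hW0]; exact hnk)] at h1
    rw [ip_codeword p h n k hh hkn h2k c hc U hU, h1]
  · intro H
    refine ⟨hc, ?_⟩
    intro d hd
    induction hd using Submodule.span_induction with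
    | mem d hd =>
        obtain ⟨W, hW, rfl⟩ := hd
        exact H W (by rw [hW]; exact hnk)
    | zero => simp [ip]
    | add a b _ _ ha hb =>
        simp only [ip, Pi.add_apply, mul_add, Finset.sum_add_distrib] at *
        rw [ha, hb, add_zero]
    | smul r a _ ha =>
        simp only [ip, Pi.smul_apply, smul_eq_mul] at *
        calc ∑ x, c x * (r * a x) = r * ∑ x, c x * a x := by
              rw [Finset.mul_sum]; exact Finset.sum_congr rfl fun x _ => by ring
          _ = 0 := by rw [ha, mul_zero]
end
end

section
/- For k ≥ n/2, the hull C_k(n,q) ∩ C_k(n,q)^⊥ equals the F_p-span of all differences K_1 − K_2 of incidence vectors of pairs of distinct k-spaces of PG(n,q). -/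
open scoped Classical

noncomputable section

-- counting lemma
lemma card_points_cast (p h n : ℕ) [Fact p.Prime] (hh : 0 < h)
    (U : Submodule (GaloisField p h) (Fin (n+1) → GaloisField p h))
    (hU : 1 ≤ Module.finrank (GaloisField p h) U) :
    ((Fintype.card {P : PGPoint p h n // P.submodule ≤ U}) : ZMod p) = 1 := by
  set K := GaloisField p h
  haveI : Fintype K := Fintype.ofFinite K
  set q := Fintype.card K with hq
  set d := Module.finrank K U with hd
  -- D : nonzero vectors of U
  set S := {P : PGPoint p h n // P.submodule ≤ U}
  haveI : Fintype U := Fintype.ofFinite U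
  set D := {v : U // v ≠ 0}
  have hrepU : ∀ P : S, (P.1.rep : Fin (n+1) → K) ∈ U := by
    intro P
    have := P.2
    rw [Projectivization.submodule_eq] at this
    exact this (Submodule.mem_span_singleton_self _)
  -- the fibration
  let φ : D → S := fun v =>
    ⟨Projectivization.mk K (v.1 : Fin (n+1) → K)
      (by simpa [Submodule.coe_eq_zero] using v.2),
     by
      rw [Projectivization.submodule_mk]
      exact (Submodule.span_singleton_le_iff_mem _ _).2 v.1.2⟩
  have hfiber : ∀ P : S, Fintype.card {v : D // φ v = P} = q - 1 := by
    intro P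
    have hrep0 : P.1.rep ≠ 0 := P.1.rep_nonzero
    let e : Kˣ → {v : D // φ v = P} := fun c =>
      ⟨⟨⟨(c : K) • P.1.rep, Submodule.smul_mem _ _ (hrepU P)⟩, by
          simp only [ne_eq, Submodule.mk_eq_zero, smul_eq_zero, not_or]
          exact ⟨c.ne_zero, hrep0⟩⟩, by
        apply Subtype.ext
        show Projectivization.mk K ((c : K) • P.1.rep) _ = P.1
        conv_rhs => rw [← P.1.mk_rep]
        rw [Projectivization.mk_eq_mk_iff]
        exact ⟨c, by simp [Units.smul_def]⟩⟩
    have hbij : Function.Bijective e := by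
      constructor
      · intro a b hab
        have h1 : (a : K) • P.1.rep = (b : K) • P.1.rep :=
          congrArg (fun x : {v : D // φ v = P} => ((x.1.1 : U) : Fin (n+1) → K)) hab
        exact Units.ext (smul_left_injective K hrep0 h1)
      · rintro ⟨⟨⟨v, hvU⟩, hv0⟩, hφ⟩
        have hv0' : v ≠ 0 := by simpa [Submodule.mk_eq_zero] using hv0
        have h2 : Projectivization.mk K v hv0' = P.1 := congrArg Subtype.val hφ
        conv_rhs at h2 => rw [← P.1.mk_rep]
        rw [Projectivization.mk_eq_mk_iff] at h2
        obtain ⟨a, ha⟩ := h2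
        refine ⟨a, ?_⟩
        apply Subtype.ext; apply Subtype.ext; apply Subtype.ext
        simpa [Units.smul_def] using ha
    have := Fintype.card_of_bijective hbij
    rw [← this, Fintype.card_units]
  -- card D = card S * (q - 1)
  have hDcard : Fintype.card D = Fintype.card S * (q - 1) := by
    rw [← Fintype.card_congr (Equiv.sigmaFiberEquiv φ), Fintype.card_sigma]
    simp [hfiber, Finset.sum_const, mul_comm]
  -- card D = q ^ d - 1
  have hUcard : Fintype.card U = q ^ d := Module.card_eq_pow_finrank
  have hD2 : Fintype.card D = q ^ d - 1 := by
    have := Fintype.card_subtype_compl (fun v : U => v = 0)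
    simp only [Fintype.card_subtype_eq (0 : U)] at this
    calc Fintype.card D = Fintype.card {v : U // ¬ v = 0} := rfl
    _ = q ^ d - 1 := by rw [this, hUcard]
  have hq0 : (q : ZMod p) = 0 := by
    have : q = p ^ h := by
      rw [hq, ← Nat.card_eq_fintype_card, GaloisField.card p h hh.ne']
    rw [this]
    push_cast
    simp [ZMod.natCast_self, zero_pow hh.ne']
  have hq1 : 1 ≤ q := Fintype.card_pos
  have hqd1 : 1 ≤ q ^ d := Nat.one_le_pow _ _ Fintype.card_pos
  -- conclude
  have key : (Fintype.card S : ZMod p) * ((q : ZMod p) - 1) = (q : ZMod p) ^ d - 1 := by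
    have := congrArg (fun m : ℕ => (m : ZMod p)) (hDcard.symm.trans hD2)
    push_cast [Nat.cast_sub hq1, Nat.cast_sub hqd1] at this
    simpa using this
  rw [hq0] at key
  have hd0 : (0 : ZMod p) ^ d = 0 := zero_pow (by omega)
  rw [hd0] at key
  have : -(Fintype.card S : ZMod p) = -1 := by linear_combination key
  exact neg_injective this

section MyAux

variable (p h n k : ℕ) [Fact p.Prime]

lemma my_ip_one (hh : 0 < h) (h2k : n ≤ 2 * k)
    (W W' : Submodule (GaloisField p h) (Fin (n+1) → GaloisField p h))
    (hW : Module.finrank (GaloisField p h) W = k + 1)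
    (hW' : Module.finrank (GaloisField p h) W' = k + 1) :
    ip (incVec p h n W) (incVec p h n W') = 1 := by
  have hfin : 1 ≤ Module.finrank (GaloisField p h) (W ⊓ W' : Submodule (GaloisField p h) (Fin (n+1) → GaloisField p h)) := by
    have hsum := Submodule.finrank_sup_add_finrank_inf_eq W W'
    have hle : Module.finrank (GaloisField p h) (W ⊔ W' : Submodule (GaloisField p h) (Fin (n+1) → GaloisField p h)) ≤ n + 1 := by
      have h1 := Submodule.finrank_le (W ⊔ W')
      rwa [Module.finrank_pi, Fintype.card_fin] at h1
    omega
  have hcard := card_points_cast p h n hh (W ⊓ W') hfin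
  rw [← hcard, Fintype.card_subtype]
  rw [ip]
  push_cast [Finset.card_filter]
  simp [incVec, ← ite_and, le_inf_iff, and_comm]

lemma my_exists_kspace (hkn : k ≤ n) :
    ∃ W : Submodule (GaloisField p h) (Fin (n+1) → GaloisField p h),
      Module.finrank (GaloisField p h) W = k + 1 := by
  obtain ⟨f, hf⟩ := exists_linearIndependent_of_le_finrank
    (R := GaloisField p h) (M := Fin (n+1) → GaloisField p h) (n := k+1)
    (by rw [Module.finrank_pi, Fintype.card_fin]; omega)
  exact ⟨Submodule.span _ (Set.range f), by
    rw [finrank_span_eq_card hf, Fintype.card_fin]⟩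

/-- `ip` with fixed second argument, as a linear map. -/
def ipL {X : Type*} [Fintype X] {p : ℕ} (d : X → ZMod p) :
    (X → ZMod p) →ₗ[ZMod p] ZMod p where
  toFun := fun c => ip c d
  map_add' := by intro a b; simp [ip, add_mul, Finset.sum_add_distrib]
  map_smul' := by intro r a; simp [ip, Finset.mul_sum, mul_assoc]

/-- `ip` with fixed first argument, as a linear map. -/
def ipR {X : Type*} [Fintype X] {p : ℕ} (d : X → ZMod p) :
    (X → ZMod p) →ₗ[ZMod p] ZMod p where
  toFun := fun c => ip d c
  map_add' := by intro a b; simp [ip, mul_add, Finset.sum_add_distrib]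
  map_smul' := by intro r a; simp [ip, Finset.mul_sum, mul_left_comm]

end MyAux

/-- for `k ≥ n/2`, the hull `C_k(n,q) ∩ C_k(n,q)^⊥` is spanned by the
differences of incidence vectors of pairs of distinct `k`-spaces of `PG(n,q)`. -/
theorem stmt10 (p h n k : ℕ) [Fact p.Prime] (hh : 0 < h) (hk1 : 1 ≤ k) (hkn : k ≤ n)
    (h2k : n ≤ 2 * k) :
    PGCode p h n k ⊓ dualCode (PGCode p h n k) =
      Submodule.span (ZMod p)
        { v | ∃ W₁ W₂ : Submodule (GaloisField p h) (Fin (n+1) → GaloisField p h),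
            Module.finrank (GaloisField p h) W₁ = k + 1 ∧
            Module.finrank (GaloisField p h) W₂ = k + 1 ∧ W₁ ≠ W₂ ∧
            v = incVec p h n W₁ - incVec p h n W₂ } := by
  apply le_antisymm
  · -- hull ≤ span of differences
    rintro v hv
    rw [Submodule.mem_inf] at hv
    obtain ⟨hv1, hv2⟩ := hv
    obtain ⟨W₀, hW₀⟩ := my_exists_kspace p h n k hkn
    rw [PGCode, Submodule.mem_span_set'] at hv1
    obtain ⟨m, f, g, hsum⟩ := hv1
    choose Wi hWi hgi using fun i => (g i).2
    have hK₀mem : incVec p h n W₀ ∈ PGCode p h n k :=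
      Submodule.subset_span ⟨W₀, hW₀, rfl⟩
    have hip0 : ip v (incVec p h n W₀) = 0 := hv2 (incVec p h n W₀) hK₀mem
    have hcoef : ∑ i, f i = 0 := by
      have h0 : ipL (incVec p h n W₀) v = 0 := hip0
      rw [← hsum, map_sum] at h0
      simp only [map_smul, smul_eq_mul] at h0
      have heach : ∀ i, ipL (incVec p h n W₀) ((g i : PGPoint p h n → ZMod p)) = 1 := by
        intro i
        show ip ((g i : PGPoint p h n → ZMod p)) (incVec p h n W₀) = 1
        rw [hgi i]
        exact my_ip_one p h n k hh h2k _ _ (hWi i) hW₀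
      simpa [heach] using h0
    have hv : v = ∑ i, f i • (incVec p h n (Wi i) - incVec p h n W₀) := by
      rw [Finset.sum_congr rfl (fun i _ => smul_sub (f i) _ _), Finset.sum_sub_distrib,
        ← Finset.sum_smul, hcoef, zero_smul, sub_zero, ← hsum]
      exact Finset.sum_congr rfl fun i _ => by rw [hgi i]
    rw [hv]
    apply Submodule.sum_smul_mem
    intro i _
    by_cases hW : Wi i = W₀
    · simp [hW]
    · exact Submodule.subset_span ⟨Wi i, W₀, hWi i, hW₀, hW, rfl⟩
  · rw [Submodule.span_le]
    rintro v ⟨W₁, W₂, hW₁, hW₂, hne, rfl⟩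
    rw [SetLike.mem_coe, Submodule.mem_inf]
    constructor
    · exact sub_mem (Submodule.subset_span ⟨W₁, hW₁, rfl⟩)
        (Submodule.subset_span ⟨W₂, hW₂, rfl⟩)
    · intro c hc
      have hker : PGCode p h n k ≤
          LinearMap.ker (ipR (incVec p h n W₁ - incVec p h n W₂)) := by
        rw [PGCode, Submodule.span_le]
        rintro c ⟨W, hW, rfl⟩
        simp only [SetLike.mem_coe, LinearMap.mem_ker]
        show ip (incVec p h n W₁ - incVec p h n W₂) (incVec p h n W) = 0
        have h1 : ip (incVec p h n W₁ - incVec p h n W₂) (incVec p h n W)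
            = ip (incVec p h n W₁) (incVec p h n W)
              - ip (incVec p h n W₂) (incVec p h n W) := by
          simp [ip, sub_mul, Finset.sum_sub_distrib]
        rw [h1, my_ip_one p h n k hh h2k _ _ hW₁ hW,
          my_ip_one p h n k hh h2k _ _ hW₂ hW, sub_self]
      exact hker hc
end
end

section
/- Let B be a set of points in PG(n,q) such that every point of PG(n,q)\B lying on a secant line to B lies on no tangent line to B. If the span of B has dimension at least n−k+2, then |B| ≥ θ_{n−k+1} = (q^{n−k+2}−1)/(q−1). -/
/-!
Every point of `⟨B⟩` lies in `B` or on a secant of `B`: adding the points of `B` one at a time, a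
new point of the span lies on the line joining an added point `P ∈ B` to an old point `Q`, and as
`Q` is in `B` or on a secant, that line is not a tangent, hence a secant. So for a fixed `P ∈ B`
the lines joining `P` to the points of `B` cover `⟨B⟩`; counting the vectors outside `P` gives
`q^r - q ≤ |B| (q² - q)` with `r = dim ⟨B⟩` as a vector space, i.e. `|B| ≥ θ_{r-2}`.
-/

open scoped Classical

noncomputable section

open Module Finset
open scoped LinearAlgebra.Projectivization

namespace Projectivization

variable {K V : Type*} [Field K] [AddCommGroup V] [Module K V]

theorem mk_eq_iff_mem_submodule {P : ℙ K V} {v : V} (hv : v ≠ 0) :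
    mk K v hv = P ↔ v ∈ P.submodule := by
  refine ⟨fun h => h ▸ (submodule_mk (K := K) v hv).symm ▸ Submodule.mem_span_singleton_self v,
    fun hvP => submodule_injective (Submodule.eq_of_le_of_finrank_le ?_ ?_)⟩
  · rwa [submodule_mk, Submodule.span_singleton_le_iff_mem]
  · rw [finrank_submodule, finrank_submodule]

theorem finrank_sup_submodule_of_ne [FiniteDimensional K V] {P Q : ℙ K V} (hPQ : P ≠ Q) :
    finrank K ↥(P.submodule ⊔ Q.submodule) = 2 := by
  have hinf : P.submodule ⊓ Q.submodule = ⊥ := by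
    by_contra hne
    replace hne : finrank K ↥(P.submodule ⊓ Q.submodule) ≠ 0 :=
      fun h => hne (Submodule.finrank_eq_zero.1 h)
    have hP : P.submodule ⊓ Q.submodule = P.submodule :=
      Submodule.eq_of_le_of_finrank_le inf_le_left (by rw [finrank_submodule]; omega)
    have hQ : P.submodule ⊓ Q.submodule = Q.submodule :=
      Submodule.eq_of_le_of_finrank_le inf_le_right (by rw [finrank_submodule]; omega)
    exact hPQ (submodule_injective (hP.symm.trans hQ))
  have := Submodule.finrank_sup_add_finrank_inf_eq P.submodule Q.submodule
  rw [hinf, finrank_bot, finrank_submodule, finrank_submodule] at this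
  omega

variable (B : Finset (ℙ K V))

def pointsOn (L : Submodule K V) : Finset (ℙ K V) :=
  B.filter fun P => P.submodule ≤ L

def OnSecant (Q : ℙ K V) : Prop :=
  ∃ L : Submodule K V, finrank K L = 2 ∧ Q.submodule ≤ L ∧ 2 ≤ #(pointsOn B L)

def SecantPointsAvoidTangents : Prop :=
  ∀ Q : ℙ K V, Q ∉ B → OnSecant B Q →
    ∀ L : Submodule K V, finrank K L = 2 → Q.submodule ≤ L → #(pointsOn B L) ≠ 1

variable {B} [FiniteDimensional K V]

theorem SecantPointsAvoidTangents.two_le_card_pointsOn_sup (hB : SecantPointsAvoidTangents B)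
    {P Q : ℙ K V} (hP : P ∈ B) (hPQ : P ≠ Q) (hQ : Q ∈ B ∨ OnSecant B Q) :
    2 ≤ #(pointsOn B (P.submodule ⊔ Q.submodule)) := by
  have hP_on : P ∈ pointsOn B (P.submodule ⊔ Q.submodule) := mem_filter.2 ⟨hP, le_sup_left⟩
  by_cases hQB : Q ∈ B
  · have hQ_on : Q ∈ pointsOn B (P.submodule ⊔ Q.submodule) := mem_filter.2 ⟨hQB, le_sup_right⟩
    exact one_lt_card.2 ⟨P, hP_on, Q, hQ_on, hPQ⟩
  · have hne := hB Q hQB (hQ.resolve_left hQB) _ (finrank_sup_submodule_of_ne hPQ) le_sup_right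
    have hpos := card_pos.2 ⟨P, hP_on⟩
    omega

theorem SecantPointsAvoidTangents.mem_or_onSecant (hB : SecantPointsAvoidTangents B) {v : V}
    (hv : v ≠ 0) (hvB : v ∈ ⨆ P ∈ B, P.submodule) : mk K v hv ∈ B ∨ OnSecant B (mk K v hv) := by
  suffices ∀ T ⊆ B, ∀ v ∈ ⨆ P ∈ T, P.submodule, ∀ hv : v ≠ 0,
      mk K v hv ∈ B ∨ OnSecant B (mk K v hv) from this B subset_rfl v hvB hv
  intro T
  induction T using Finset.induction_on with
  | empty => simp
  | insert P T _ ih =>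
    intro hTB v hv hv0
    have hP : P ∈ B := hTB (mem_insert_self P T)
    rw [Finset.iSup_insert] at hv
    obtain ⟨x, hx, w, hw, rfl⟩ := Submodule.mem_sup.1 hv
    by_cases hxw : x + w ∈ P.submodule
    · exact .inl ((mk_eq_iff_mem_submodule hv0).2 hxw ▸ hP)
    have hwP : w ∉ P.submodule := fun h => hxw (add_mem hx h)
    have hw0 : w ≠ 0 := by rintro rfl; exact hwP (zero_mem _)
    have hPw : P ≠ mk K w hw0 := fun h => hwP ((mk_eq_iff_mem_submodule hw0).1 h.symm)
    refine .inr ⟨_, finrank_sup_submodule_of_ne hPw, ?_,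
      hB.two_le_card_pointsOn_sup hP hPw (ih (fun b hb => hTB (mem_insert_of_mem hb)) w hw hw0)⟩
    rw [submodule_mk, submodule_mk, Submodule.span_singleton_le_iff_mem]
    exact add_mem (Submodule.mem_sup_left hx)
      (Submodule.mem_sup_right (Submodule.mem_span_singleton_self w))

theorem SecantPointsAvoidTangents.exists_mem_sup (hB : SecantPointsAvoidTangents B) {P : ℙ K V}
    (hP : P ∈ B) {v : V} (hvB : v ∈ ⨆ Q ∈ B, Q.submodule) :
    ∃ b ∈ B, v ∈ P.submodule ⊔ b.submodule := by
  by_cases hvP : v ∈ P.submodule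
  · exact ⟨P, hP, Submodule.mem_sup_left hvP⟩
  have hv : v ≠ 0 := by rintro rfl; exact hvP (zero_mem _)
  have hPv : P ≠ mk K v hv := fun h => hvP ((mk_eq_iff_mem_submodule hv).1 h.symm)
  obtain ⟨b, hb_on, hbP⟩ :=
    exists_mem_ne (hB.two_le_card_pointsOn_sup hP hPv (hB.mem_or_onSecant hv hvB)) P
  obtain ⟨hb, hb_le⟩ := mem_filter.1 hb_on
  have hline : P.submodule ⊔ b.submodule = P.submodule ⊔ (mk K v hv).submodule :=
    Submodule.eq_of_le_of_finrank_le (sup_le le_sup_left hb_le) (by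
      rw [finrank_sup_submodule_of_ne hPv, finrank_sup_submodule_of_ne hbP.symm])
  exact ⟨b, hb, hline ▸ Submodule.mem_sup_right ((mk_eq_iff_mem_submodule hv).1 rfl)⟩

end Projectivization

theorem Nat.geom_sum_le_of_pow_sub_le_mul {q m r c : ℕ} (hq : 2 ≤ q) (hmr : m + 1 ≤ r)
    (h : q ^ r - q ≤ c * (q ^ 2 - q)) : ∑ i ∈ range m, q ^ i ≤ c := by
  obtain ⟨t, rfl⟩ : ∃ t, q = t + 1 := ⟨q - 1, by omega⟩
  have hgeom := geom_sum_mul_add t m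
  have hsq : (t + 1) ^ 2 - (t + 1) = (t + 1) * t := by
    rw [Nat.sub_eq_of_eq_add]; ring
  have hmono : (t + 1) ^ (m + 1) ≤ (t + 1) ^ r := Nat.pow_le_pow_right (by omega) hmr
  rw [hsq] at h
  have hpos : 0 < (t + 1) * t := Nat.mul_pos t.succ_pos (by omega)
  refine Nat.le_of_mul_le_mul_right ?_ hpos
  calc (∑ i ∈ range m, (t + 1) ^ i) * ((t + 1) * t)
      = (t + 1) ^ (m + 1) - (t + 1) := by
        rw [pow_succ, ← hgeom, Nat.sub_eq_of_eq_add]; ring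
    _ ≤ (t + 1) ^ r - (t + 1) := by omega
    _ ≤ c * ((t + 1) * t) := h

section Counting

variable {K V : Type*} [Field K] [AddCommGroup V] [Module K V] [FiniteDimensional K V]

theorem Submodule.ncard_coe (W : Submodule K V) :
    (W : Set V).ncard = Nat.card K ^ finrank K W := by
  rw [← Nat.card_coe_set_eq, SetLike.coe_sort_coe, Module.natCard_eq_pow_finrank (K := K)]

theorem Submodule.ncard_coe_sdiff [Finite K] {W₁ W₂ : Submodule K V} (h : W₁ ≤ W₂) :
    ((W₂ : Set V) \ W₁).ncard = Nat.card K ^ finrank K W₂ - Nat.card K ^ finrank K W₁ := by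
  have := Module.finite_of_finite K (M := V)
  rw [Set.ncard_sdiff h, ncard_coe, ncard_coe]

theorem Submodule.pow_finrank_sub_le_card_mul [Finite K] {ι : Type*} (s : Finset ι)
    {P S : Submodule K V} (W : ι → Submodule K V) {e : ℕ} (hPS : P ≤ S)
    (hW : ∀ i ∈ s, P ≤ W i ∧ finrank K (W i) ≤ e)
    (hcover : ∀ v ∈ S, ∃ i ∈ s, v ∈ W i) :
    Nat.card K ^ finrank K S - Nat.card K ^ finrank K P
      ≤ #s * (Nat.card K ^ e - Nat.card K ^ finrank K P) := by
  have := Module.finite_of_finite K (M := V)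
  have hsub : (S : Set V) \ P ⊆ ⋃ i ∈ s, (W i : Set V) \ P := by
    rintro v ⟨hvS, hvP⟩
    obtain ⟨i, hi, hvW⟩ := hcover v hvS
    exact Set.mem_biUnion hi ⟨hvW, hvP⟩
  rw [← ncard_coe_sdiff hPS, ← smul_eq_mul, ← sum_const]
  refine (Set.ncard_le_ncard hsub).trans ((set_ncard_biUnion_le _ _).trans (sum_le_sum ?_))
  intro i hi
  rw [ncard_coe_sdiff (hW i hi).1]
  exact Nat.sub_le_sub_right (Nat.pow_le_pow_right Nat.card_pos (hW i hi).2) _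

end Counting

namespace Projectivization.SecantPointsAvoidTangents

variable {K V : Type*} [Field K] [Finite K] [AddCommGroup V] [Module K V] [FiniteDimensional K V]
  {B : Finset (ℙ K V)}

theorem geom_sum_le_card (hB : SecantPointsAvoidTangents B) {m : ℕ}
    (hm : m + 1 ≤ finrank K ↥(⨆ P ∈ B, P.submodule)) :
    ∑ i ∈ range m, Nat.card K ^ i ≤ #B := by
  obtain ⟨P, hP⟩ : B.Nonempty := by
    rw [nonempty_iff_ne_empty]
    rintro rfl
    rw [← Finset.sup_eq_iSup, Finset.sup_empty, finrank_bot] at hm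
    omega
  have hcount := Submodule.pow_finrank_sub_le_card_mul B (fun b => P.submodule ⊔ b.submodule)
    (S := ⨆ Q ∈ B, Q.submodule) (e := 2) (le_biSup _ hP)
    (fun b _ => ⟨le_sup_left, (Submodule.finrank_add_le_finrank_add_finrank _ _).trans
      (by rw [finrank_submodule, finrank_submodule])⟩)
    (fun v hv => hB.exists_mem_sup hP hv)
  rw [finrank_submodule, pow_one] at hcount
  exact Nat.geom_sum_le_of_pow_sub_le_mul Finite.one_lt_card hm hcount

end Projectivization.SecantPointsAvoidTangents

theorem stmt17_general (p h n k : ℕ) [Fact p.Prime] (hh : 0 < h)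
    (B : Finset (PGPoint p h n))
    (hsec : ∀ Q : PGPoint p h n, Q ∉ B →
      (∃ L : Submodule (GaloisField p h) (Fin (n+1) → GaloisField p h),
        Module.finrank (GaloisField p h) L = 2 ∧ Q.submodule ≤ L ∧
          2 ≤ (B.filter fun P => P.submodule ≤ L).card) →
      ∀ L : Submodule (GaloisField p h) (Fin (n+1) → GaloisField p h),
        Module.finrank (GaloisField p h) L = 2 → Q.submodule ≤ L →
          (B.filter fun P => P.submodule ≤ L).card ≠ 1)
    (hspan : n - k + 3 ≤ Module.finrank (GaloisField p h)
      (↥(⨆ P ∈ B, (Projectivization.submodule P :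
          Submodule (GaloisField p h) (Fin (n+1) → GaloisField p h))))) :
    ∑ i ∈ Finset.range (n - k + 2), (p ^ h) ^ i ≤ B.card := by
  rw [← GaloisField.card p h hh.ne']
  exact Projectivization.SecantPointsAvoidTangents.geom_sum_le_card hsec hspan

/-- let `B` be a set of points of `PG(n,q)` such that every point outside
`B` lying on a secant line to `B` lies on no tangent line to `B`.  If the span of `B`
has (projective) dimension at least `n-k+2`, then `|B| ≥ θ_{n-k+1}`. -/
theorem stmt17 (p h n k : ℕ) [Fact p.Prime] (hh : 0 < h) (hk1 : 1 ≤ k) (hkn : k ≤ n)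
    (B : Finset (PGPoint p h n))
    (hsec : ∀ Q : PGPoint p h n, Q ∉ B →
      (∃ L : Submodule (GaloisField p h) (Fin (n+1) → GaloisField p h),
        Module.finrank (GaloisField p h) L = 2 ∧ Q.submodule ≤ L ∧
          2 ≤ (B.filter fun P => P.submodule ≤ L).card) →
      ∀ L : Submodule (GaloisField p h) (Fin (n+1) → GaloisField p h),
        Module.finrank (GaloisField p h) L = 2 → Q.submodule ≤ L →
          (B.filter fun P => P.submodule ≤ L).card ≠ 1)
    (hspan : n - k + 3 ≤ Module.finrank (GaloisField p h)
      (↥(⨆ P ∈ B, (Projectivization.submodule P :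
          Submodule (GaloisField p h) (Fin (n+1) → GaloisField p h))))) :
    ∑ i ∈ Finset.range (n - k + 2), (p ^ h) ^ i ≤ B.card :=
  stmt17_general p h n k hh B hsec hspan
end
end

section
/- Let B be a minimal (n−k)-blocking set in PG(n,q) of size q^{n−k} + x with x < (q^{n−k}+1)/2, such that some (n−k)-space T meets B in exactly x points, and suppose every k-space meets B in 1 mod p points. Then the difference of the incidence vectors of B and T is a codeword of C_k(n,q)^⊥ of weight 2q^{n−k} + θ_{n−k−1} − x. -/
open scoped Classical

noncomputable section

noncomputable instance (p h : ℕ) [Fact p.Prime] : Fintype (GaloisField p h) :=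
  Fintype.ofFinite _

lemma cardK (p h : ℕ) [Fact p.Prime] (hh : 0 < h) :
    Fintype.card (GaloisField p h) = p ^ h := by
  rw [← Nat.card_eq_fintype_card, GaloisField.card p h hh.ne']

lemma geom_nat (q d : ℕ) (hq : 1 ≤ q) :
    (∑ i ∈ Finset.range d, q ^ i) * (q - 1) = q ^ d - 1 := by
  have h1qd : 1 ≤ q ^ d := Nat.one_le_pow _ _ (by omega)
  zify [hq, h1qd]
  exact geom_sum_mul _ _

lemma card_points (p h n : ℕ) [Fact p.Prime] (hh : 0 < h)
    (W : Submodule (GaloisField p h) (Fin (n+1) → GaloisField p h)) :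
    (Finset.univ.filter fun P : PGPoint p h n => P.submodule ≤ W).card
      = ∑ i ∈ Finset.range (Module.finrank (GaloisField p h) W), (p ^ h) ^ i := by
  set K := GaloisField p h
  set V := (Fin (n+1) → K)
  set q := p ^ h with hqdef
  have hp2 : 2 ≤ p := (Fact.out : p.Prime).two_le
  have hq2 : 2 ≤ q := le_trans hp2 (Nat.le_self_pow hh.ne' p)
  set d := Module.finrank K W with hd
  have hone : (Pi.single 0 1 : V) ≠ 0 := by
    intro hcon
    have := congrFun hcon (0 : Fin (n+1))
    simp at this
  set g : V → PGPoint p h n := fun v =>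
    if hv : v = 0 then Projectivization.mk K (Pi.single 0 1) hone
    else Projectivization.mk K v hv with hg
  set Pts := Finset.univ.filter fun P : PGPoint p h n => P.submodule ≤ W with hPts
  set A := Finset.univ.filter fun v : V => v ∈ W ∧ v ≠ 0 with hA
  have hmapsto : ∀ v ∈ A, g v ∈ Pts := by
    intro v hv
    rw [hA, Finset.mem_filter] at hv
    obtain ⟨-, hvW, hv0⟩ := hv
    rw [hPts, Finset.mem_filter]
    refine ⟨Finset.mem_univ _, ?_⟩
    rw [hg]
    simp only [dif_neg hv0, Projectivization.submodule_mk]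
    exact (Submodule.span_singleton_le_iff_mem _ _).mpr hvW
  have hfib : ∀ P ∈ Pts, (A.filter fun v => g v = P).card = q - 1 := by
    intro P hP
    rw [hPts, Finset.mem_filter] at hP
    have hPW : P.submodule ≤ W := hP.2
    have hrepmem : P.rep ∈ P.submodule := by
      rw [Projectivization.submodule_eq]
      exact Submodule.mem_span_singleton_self _
    have hrepW : P.rep ∈ W := hPW hrepmem
    have hinj : Function.Injective (fun c : Kˣ => (c : K) • P.rep) := by
      intro a b hab
      exact Units.ext (smul_left_injective K P.rep_nonzero hab)
    have himg : (A.filter fun v => g v = P)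
        = Finset.univ.image (fun c : Kˣ => (c : K) • P.rep) := by
      ext v
      simp only [Finset.mem_filter, Finset.mem_image, Finset.mem_univ, true_and, hA]
      constructor
      · rintro ⟨⟨hvW, hv0⟩, hgv⟩
        rw [hg] at hgv
        simp only [dif_neg hv0] at hgv
        rw [← Projectivization.mk_rep P] at hgv
        obtain ⟨a, ha⟩ := (Projectivization.mk_eq_mk_iff K _ _ hv0 P.rep_nonzero).mp hgv
        exact ⟨a, by simpa [Units.smul_def] using ha⟩
      · rintro ⟨c, rfl⟩
        have hv0 : (c : K) • P.rep ≠ 0 := smul_ne_zero c.ne_zero P.rep_nonzero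
        refine ⟨⟨W.smul_mem _ hrepW, hv0⟩, ?_⟩
        rw [hg]
        simp only [dif_neg hv0]
        conv_rhs => rw [← Projectivization.mk_rep P]
        exact (Projectivization.mk_eq_mk_iff K _ _ hv0 P.rep_nonzero).mpr
          ⟨c, by simp [Units.smul_def]⟩
    rw [himg, Finset.card_image_of_injective _ hinj, Finset.card_univ,
      Fintype.card_units, cardK p h hh]
  have hAcard : A.card = Pts.card * (q - 1) := by
    rw [Finset.card_eq_sum_card_fiberwise hmapsto, Finset.sum_congr rfl hfib,
      Finset.sum_const, smul_eq_mul]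
  have hWcard : Fintype.card W = q ^ d := by
    rw [Module.card_eq_pow_finrank (K := K) (V := W), cardK p h hh]
  have hAcard' : A.card = q ^ d - 1 := by
    have h1 : A = (Finset.univ.filter fun v : V => v ∈ W).erase 0 := by
      ext v
      simp only [hA, Finset.mem_filter, Finset.mem_erase, Finset.mem_univ, true_and]
      tauto
    have h2 : (Finset.univ.filter fun v : V => v ∈ W).card = Fintype.card W := by
      rw [← Fintype.card_subtype]
    rw [h1, Finset.card_erase_of_mem (by simp [W.zero_mem]), h2, hWcard]
  have := geom_nat q d (by omega)
  have hfin : Pts.card * (q - 1) = (∑ i ∈ Finset.range d, q ^ i) * (q - 1) := by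
    omega
  exact Nat.eq_of_mul_eq_mul_right (by omega) hfin


/-- for a minimal `(n-k)`-blocking set `B` of size `q^{n-k}+x`,
`x < (q^{n-k}+1)/2`, having an `(n-k)`-space `T` meeting it in exactly `x` points,
and meeting every `k`-space in `1 mod p` points, the word `B - T` is a codeword of
`C_k(n,q)^⊥` of weight `2q^{n-k} + θ_{n-k-1} - x`. -/
theorem stmt18 (p h n k x : ℕ) [Fact p.Prime] (hh : 0 < h) (hk1 : 1 ≤ k) (hkn : k < n)
    (B : Finset (PGPoint p h n))
    -- B is an (n-k)-blocking set: it meets every k-space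
    (hbl : ∀ S : Submodule (GaloisField p h) (Fin (n+1) → GaloisField p h),
      Module.finrank (GaloisField p h) S = k + 1 → ∃ P ∈ B, P.submodule ≤ S)
    -- B is minimal
    (hmin : ∀ B' ⊂ B, ¬ ∀ S : Submodule (GaloisField p h) (Fin (n+1) → GaloisField p h),
      Module.finrank (GaloisField p h) S = k + 1 → ∃ P ∈ B', P.submodule ≤ S)
    (hcard : B.card = (p ^ h) ^ (n - k) + x) (hx : 2 * x < (p ^ h) ^ (n - k) + 1)
    (T : Submodule (GaloisField p h) (Fin (n+1) → GaloisField p h))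
    (hT : Module.finrank (GaloisField p h) T = n - k + 1)
    (hTB : (B.filter fun P => P.submodule ≤ T).card = x)
    -- every k-space meets B in 1 mod p points
    (hmod : ∀ S : Submodule (GaloisField p h) (Fin (n+1) → GaloisField p h),
      Module.finrank (GaloisField p h) S = k + 1 →
        (B.filter fun P => P.submodule ≤ S).card % p = 1 % p) :
    ((fun P => if P ∈ B then (1 : ZMod p) else 0) - incVec p h n T)
        ∈ dualCode (PGCode p h n k) ∧
    wt ((fun P => if P ∈ B then (1 : ZMod p) else 0) - incVec p h n T)
      = 2 * (p ^ h) ^ (n - k) + (∑ i ∈ Finset.range (n - k), (p ^ h) ^ i) - x := by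
  classical
  have hp2 : 2 ≤ p := (Fact.out : p.Prime).two_le
  set f : PGPoint p h n → ZMod p := fun P => if P ∈ B then (1 : ZMod p) else 0 with hf
  set w : PGPoint p h n → ZMod p := f - incVec p h n T with hw
  have hgen : ∀ S : Submodule (GaloisField p h) (Fin (n+1) → GaloisField p h),
      Module.finrank (GaloisField p h) S = k + 1 → ip w (incVec p h n S) = 0 := by
    intro S hS
    have hsplit : ip w (incVec p h n S)
        = (∑ P : PGPoint p h n, f P * incVec p h n S P)
          - (∑ P : PGPoint p h n, incVec p h n T P * incVec p h n S P) := by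
      rw [ip, ← Finset.sum_sub_distrib]
      apply Finset.sum_congr rfl
      intro P _
      rw [hw, Pi.sub_apply, sub_mul]
    -- first sum
    have h1 : (∑ P : PGPoint p h n, f P * incVec p h n S P) = 1 := by
      calc (∑ P : PGPoint p h n, f P * incVec p h n S P)
          = ∑ P : PGPoint p h n,
              (if P ∈ B ∧ P.submodule ≤ S then (1 : ZMod p) else 0) := by
            apply Finset.sum_congr rfl
            intro P _
            by_cases hb : P ∈ B <;> by_cases ht : P.submodule ≤ S <;>
              simp [hf, incVec, hb, ht]
        _ = ((Finset.univ.filter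
              fun P : PGPoint p h n => P ∈ B ∧ P.submodule ≤ S).card : ZMod p) :=
            Finset.sum_boole _ _
        _ = ((B.filter fun P => P.submodule ≤ S).card : ZMod p) := by
            congr 2
            ext P
            simp [Finset.mem_filter]
        _ = 1 := by
            rw [← ZMod.natCast_mod, hmod S hS, ZMod.natCast_mod, Nat.cast_one]
    -- second sum
    have h2 : (∑ P : PGPoint p h n, incVec p h n T P * incVec p h n S P) = 1 := by
      have hcount : (∑ P : PGPoint p h n, incVec p h n T P * incVec p h n S P)
          = ((Finset.univ.filter
              fun P : PGPoint p h n => P.submodule ≤ T ⊓ S).card : ZMod p) := by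
        calc (∑ P : PGPoint p h n, incVec p h n T P * incVec p h n S P)
            = ∑ P : PGPoint p h n,
                (if P.submodule ≤ T ⊓ S then (1 : ZMod p) else 0) := by
              apply Finset.sum_congr rfl
              intro P _
              by_cases ht : P.submodule ≤ T <;> by_cases hs : P.submodule ≤ S <;>
                simp [incVec, ht, hs, le_inf_iff]
          _ = _ := Finset.sum_boole _ _
      rw [hcount, card_points p h n hh (T ⊓ S)]
      set d := Module.finrank (GaloisField p h) ↥(T ⊓ S) with hd
      have hVrank : Module.finrank (GaloisField p h)
          (Fin (n+1) → GaloisField p h) = n + 1 := Module.finrank_fin_fun _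
      have hdim := Submodule.finrank_sup_add_finrank_inf_eq T S
      have hle : Module.finrank (GaloisField p h) ↥(T ⊔ S) ≤ n + 1 := by
        have := Submodule.finrank_le (T ⊔ S)
        rwa [hVrank] at this
      have hd1 : 1 ≤ d := by
        rw [hT, hS] at hdim
        have hkn' : k ≤ n := hkn.le
        omega
      obtain ⟨m, hm⟩ : ∃ m, d = m + 1 := ⟨d - 1, by omega⟩
      rw [hm, Nat.cast_sum, Finset.sum_range_succ']
      have hp0 : ((p ^ h : ℕ) : ZMod p) = 0 := by
        rw [Nat.cast_pow, ZMod.natCast_self, zero_pow hh.ne']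
      have hz : ∀ i : ℕ, (((p ^ h) ^ (i+1) : ℕ) : ZMod p) = 0 := by
        intro i
        rw [Nat.cast_pow, hp0, zero_pow (Nat.succ_ne_zero i)]
      simp [hz]
    rw [hsplit, h1, h2, sub_self]
  constructor
  · -- dual code membership
    show ∀ c ∈ PGCode p h n k, ip w c = 0
    intro c hc
    induction hc using Submodule.span_induction with
    | mem c hcmem =>
      obtain ⟨S, hS, rfl⟩ := hcmem
      exact hgen S hS
    | zero => simp [ip]
    | add a b ha hb iha ihb =>
      have : ip w (a + b) = ip w a + ip w b := by
        simp [ip, mul_add, Finset.sum_add_distrib]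
      rw [this, iha, ihb, add_zero]
    | smul r a ha iha =>
      have : ip w (r • a) = r * ip w a := by
        simp [ip, Finset.mul_sum, mul_left_comm]
      rw [this, iha, mul_zero]
  · -- weight
    set TP := Finset.univ.filter fun P : PGPoint p h n => P.submodule ≤ T with hTP
    have hwne : (Finset.univ.filter fun P => w P ≠ 0) = (B \ TP) ∪ (TP \ B) := by
      ext P
      simp only [Finset.mem_filter, Finset.mem_univ, true_and, Finset.mem_union,
        Finset.mem_sdiff, hTP, hw, hf, Pi.sub_apply, incVec]
      by_cases hb : P ∈ B <;> by_cases ht : P.submodule ≤ T <;>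
        simp [hb, ht]
    have hdisj : Disjoint (B \ TP) (TP \ B) := by
      rw [Finset.disjoint_left]
      intro P hP1 hP2
      exact (Finset.mem_sdiff.mp hP2).2 (Finset.mem_sdiff.mp hP1).1
    have hTPcard : TP.card = ∑ i ∈ Finset.range (n - k + 1), (p ^ h) ^ i := by
      rw [hTP, card_points p h n hh T, hT]
    have hBTP : (B ∩ TP).card = x := by
      have : B ∩ TP = B.filter fun P => P.submodule ≤ T := by
        ext P; simp [hTP, Finset.mem_filter]
      rw [this, hTB]
    have hTPB : (TP ∩ B).card = x := by
      rw [Finset.inter_comm]; exact hBTP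
    have h1 : (B \ TP).card + (B ∩ TP).card = B.card :=
      Finset.card_sdiff_add_card_inter B TP
    have h2 : (TP \ B).card + (TP ∩ B).card = TP.card :=
      Finset.card_sdiff_add_card_inter TP B
    rw [wt, hwne, Finset.card_union_of_disjoint hdisj]
    rw [Finset.sum_range_succ] at hTPcard
    omega
end
end
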